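/- Let ε ∈ [0,1), let 𝓟 and 𝓔 be sets of density matrices on ℂ^d such that conv(𝓟) ∩ aff(𝓔) ≠ ∅, and let ρ′ and τ′ be density matrices on ℂ^{d′}. Then there exists a linear map L from d×d complex matrices to d′×d′ complex matrices satisfying T(L(ρ), ρ′) ≤ ε for all ρ ∈ 𝓟 and L(τ) = τ′ for all τ ∈ 𝓔, if and only if ε ≥ T(ρ′, τ′). -/

import Mathlib

open Matrix ComplexOrder

/-- Trace norm of a complex matrix: the trace of `sqrt(AᴴA)` (sum of singular values). -/
noncomputable def traceNorm {n : Type*} [Fintype n] [DecidableEq n]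
    (A : Matrix n n ℂ) : ℝ :=
  (((Matrix.posSemidef_conjTranspose_mul_self A).1.eigenvectorUnitary : Matrix n n ℂ) *
      Matrix.diagonal ((fun x : ℝ => ((√x : ℝ) : ℂ)) ∘
        (Matrix.posSemidef_conjTranspose_mul_self A).1.eigenvalues) *
      (star ((Matrix.posSemidef_conjTranspose_mul_self A).1.eigenvectorUnitary :
        Matrix n n ℂ))).trace.re

/-- Trace distance `T(X,Y) = ‖X - Y‖₁ / 2`. -/
noncomputable def traceDist {n : Type*} [Fintype n] [DecidableEq n]
    (X Y : Matrix n n ℂ) : ℝ :=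
  traceNorm (X - Y) / 2

/-- A density matrix: positive semidefinite with unit trace. -/
def IsDensityMatrix {n : Type*} [Fintype n] (ρ : Matrix n n ℂ) : Prop :=
  ρ.PosSemidef ∧ ρ.trace = 1

/-- The battery Gibbs state `π_M = diag(1 - 1/M, 1/M)`. -/
noncomputable def piM (M : ℝ) : Matrix (Fin 2) (Fin 2) ℂ :=
  Matrix.diagonal ![((1 - 1/M : ℝ) : ℂ), ((1/M : ℝ) : ℂ)]

/-- The excited battery state `|1⟩⟨1| = diag(0,1)`. -/
def ket1 : Matrix (Fin 2) (Fin 2) ℂ :=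
  Matrix.diagonal ![0, 1]

/-- A test (POVM effect): `0 ≤ E ≤ I`. -/
def IsTest {n : Type*} [Fintype n] [DecidableEq n] (E : Matrix n n ℂ) : Prop :=
  E.PosSemidef ∧ (1 - E).PosSemidef

/-- Choi matrix `Σ_{ij} E_{ij} ⊗ F(E_{ij})` of a linear map on matrices. -/
noncomputable def choiMatrix {n m : Type*} [Fintype n] [DecidableEq n] [Fintype m]
    (F : Matrix n n ℂ →ₗ[ℂ] Matrix m m ℂ) :
    Matrix (n × m) (n × m) ℂ :=
  fun p q => F (Matrix.single p.1 q.1 1) p.2 q.2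

/-- Completely positive (positive semidefinite Choi matrix) and trace preserving. -/
def IsCPTP {n m : Type*} [Fintype n] [DecidableEq n] [Fintype m]
    (F : Matrix n n ℂ →ₗ[ℂ] Matrix m m ℂ) : Prop :=
  (choiMatrix F).PosSemidef ∧ ∀ X, (F X).trace = X.trace

/-- `n`-fold Kronecker (tensor) power of a `2 × 2` matrix, indexed by bit strings. -/
def tensPow (A : Matrix (Fin 2) (Fin 2) ℂ) (n : ℕ) :
    Matrix (Fin n → Fin 2) (Fin n → Fin 2) ℂ :=
  fun x y => ∏ i, A (x i) (y i)

/-- `ε`-ball (in trace distance) of density matrices around a set `𝓟`. -/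
noncomputable def metBall {n : Type*} [Fintype n] [DecidableEq n]
    (ε : ℝ) (P : Set (Matrix n n ℂ)) : Set (Matrix n n ℂ) :=
  {ω | IsDensityMatrix ω ∧ ∃ ρ ∈ P, traceDist ω ρ ≤ ε}

/-!
A linear map `L` with `L τ = τ'` on `𝓔` sends every affine combination of points of `𝓔`, in
particular a point `σ ∈ conv 𝓟 ∩ aff 𝓔`, to `τ'`. Since `X ↦ T(X, ρ')` is convex, the bound
`T(L ρ, ρ') ≤ ε` on `𝓟` passes to `σ`, giving `T(ρ', τ') ≤ ε`. Convexity of the trace norm comes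
from its variational form `‖C‖₁ = max_M Re tr (M C)` over contractions `M`. Conversely, the
replacement map `X ↦ tr X • τ'` works whenever `T(ρ', τ') ≤ ε`.
-/

section InnerProduct

variable {n : Type*} [Fintype n]

theorem EuclideanSpace.norm_toLp_eq_sqrt (x : n → ℂ) :
    ‖WithLp.toLp 2 x‖ = √(star x ⬝ᵥ x).re := by
  rw [norm_eq_sqrt_re_inner (𝕜 := ℂ), inner_toLp_toLp, dotProduct_comm]
  rfl

theorem re_star_dotProduct_le (a b : n → ℂ) :
    (star a ⬝ᵥ b).re ≤ √(star a ⬝ᵥ a).re * √(star b ⬝ᵥ b).re := by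
  rw [dotProduct_comm, ← EuclideanSpace.inner_toLp_toLp, ← EuclideanSpace.norm_toLp_eq_sqrt,
    ← EuclideanSpace.norm_toLp_eq_sqrt]
  exact re_inner_le_norm (𝕜 := ℂ) _ _

variable [DecidableEq n]

theorem Matrix.trace_toEuclideanLin {𝕜 : Type*} [RCLike 𝕜] (X : Matrix n n 𝕜) :
    LinearMap.trace 𝕜 _ (toEuclideanLin X) = X.trace :=
  (LinearMap.trace_conj' (toLin' X) (WithLp.linearEquiv 2 𝕜 (n → 𝕜)).symm).trans
    (trace_toLin'_eq X)

theorem Matrix.trace_eq_sum_star_dotProduct_mulVec {𝕜 : Type*} [RCLike 𝕜] (X : Matrix n n 𝕜)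
    (b : OrthonormalBasis n 𝕜 (EuclideanSpace 𝕜 n)) :
    X.trace = ∑ i, star ⇑(b i) ⬝ᵥ (X *ᵥ ⇑(b i)) := by
  rw [← trace_toEuclideanLin, LinearMap.trace_eq_sum_inner _ b]
  simp [EuclideanSpace.inner_eq_star_dotProduct, dotProduct_comm]

theorem Matrix.re_star_dotProduct_conjTranspose_mulVec_le {M : Matrix n n ℂ}
    (hM : (1 - M * Mᴴ).PosSemidef) (x : n → ℂ) :
    (star (Mᴴ *ᵥ x) ⬝ᵥ (Mᴴ *ᵥ x)).re ≤ (star x ⬝ᵥ x).re := by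
  have hx : star x ⬝ᵥ ((1 - M * Mᴴ) *ᵥ x) = star x ⬝ᵥ x - star (Mᴴ *ᵥ x) ⬝ᵥ (Mᴴ *ᵥ x) := by
    rw [sub_mulVec, one_mulVec, dotProduct_sub, star_mulVec, conjTranspose_conjTranspose,
      ← mulVec_mulVec, dotProduct_mulVec]
  have := (Complex.le_def.mp (hM.dotProduct_mulVec_nonneg x)).1
  rw [hx, Complex.zero_re, Complex.sub_re] at this
  linarith

end InnerProduct

section TraceNorm

variable {n : Type*} [Fintype n] [DecidableEq n]

theorem traceNorm_eq_sum_sqrt_eigenvalues (C : Matrix n n ℂ) :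
    traceNorm C = ∑ i, √((isHermitian_conjTranspose_mul_self C).eigenvalues i) := by
  rw [traceNorm, trace_mul_cycle, UnitaryGroup.star_mul_self, one_mul, trace_diagonal,
    Complex.re_sum]
  rfl

theorem traceNorm_neg (C : Matrix n n ℂ) : traceNorm (-C) = traceNorm C := by
  simp only [traceNorm_eq_sum_sqrt_eigenvalues, conjTranspose_neg, neg_mul_neg]

theorem traceDist_comm (X Y : Matrix n n ℂ) : traceDist X Y = traceDist Y X := by
  rw [traceDist, traceDist, ← neg_sub, traceNorm_neg]

theorem re_trace_mul_le_traceNorm {M : Matrix n n ℂ} (hM : (1 - M * Mᴴ).PosSemidef)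
    (C : Matrix n n ℂ) : (M * C).trace.re ≤ traceNorm C := by
  set hA := isHermitian_conjTranspose_mul_self C
  rw [trace_eq_sum_star_dotProduct_mulVec _ hA.eigenvectorBasis,
    traceNorm_eq_sum_sqrt_eigenvalues, Complex.re_sum]
  refine Finset.sum_le_sum fun i _ => ?_
  set v := ⇑(hA.eigenvectorBasis i)
  have hv : √(star v ⬝ᵥ v).re = 1 := by
    rw [← EuclideanSpace.norm_toLp_eq_sqrt, WithLp.toLp_ofLp, hA.eigenvectorBasis.orthonormal.1 i]
  have hCv : (star (C *ᵥ v) ⬝ᵥ (C *ᵥ v)).re = hA.eigenvalues i := by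
    rw [hA.eigenvalues_eq, star_mulVec, dotProduct_mulVec, vecMul_vecMul, ← dotProduct_mulVec]
    rfl
  calc (star v ⬝ᵥ (M * C) *ᵥ v).re = (star (Mᴴ *ᵥ v) ⬝ᵥ (C *ᵥ v)).re := by
        rw [← mulVec_mulVec, dotProduct_mulVec, star_mulVec, conjTranspose_conjTranspose]
    _ ≤ √(star (Mᴴ *ᵥ v) ⬝ᵥ (Mᴴ *ᵥ v)).re * √(star (C *ᵥ v) ⬝ᵥ (C *ᵥ v)).re :=
        re_star_dotProduct_le _ _
    _ ≤ 1 * √(hA.eigenvalues i) := by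
        rw [hCv]
        gcongr
        exact hv ▸ Real.sqrt_le_sqrt (re_star_dotProduct_conjTranspose_mulVec_le hM v)
    _ = √(hA.eigenvalues i) := one_mul _

/- The witness is `M = (CᴴC)^{-1/2} Cᴴ`; since `(√0)⁻¹ = 0`, the inverse square root is taken
on the support of `CᴴC` only, so `M Mᴴ` is the projection onto that support. -/
theorem exists_trace_mul_eq_traceNorm (C : Matrix n n ℂ) :
    ∃ M : Matrix n n ℂ, (1 - M * Mᴴ).PosSemidef ∧ (M * C).trace = traceNorm C := by
  set hA := isHermitian_conjTranspose_mul_self C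
  set U := hA.eigenvectorUnitary
  set φ := Unitary.conjStarAlgAut ℂ (Matrix n n ℂ) U
  set lam := hA.eigenvalues
  set Λ : Matrix n n ℂ := diagonal fun i => (lam i : ℂ)
  set D : Matrix n n ℂ := diagonal fun i => ((√(lam i))⁻¹ : ℝ)
  have hsqrt (i : n) : (√(lam i) : ℂ)⁻¹ * lam i = √(lam i) := by
    rw [← Complex.ofReal_inv, ← Complex.ofReal_mul, inv_mul_eq_div, Real.div_sqrt]
  have hspec : Cᴴ * C = φ Λ := hA.spectral_theorem
  have hD : (φ D)ᴴ = φ D := by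
    rw [← star_eq_conjTranspose, ← map_star, star_eq_conjTranspose, diagonal_conjTranspose]
    simp [D]
  refine ⟨φ D * Cᴴ, ?_, ?_⟩
  · have hMM : φ D * Cᴴ * (φ D * Cᴴ)ᴴ = φ (D * Λ * D) := by
      rw [conjTranspose_mul, conjTranspose_conjTranspose, hD,
        show φ D * Cᴴ * (C * φ D) = φ D * (Cᴴ * C) * φ D by noncomm_ring, hspec, map_mul,
        map_mul]
    have hdiag : 1 - D * Λ * D = diagonal fun i => ((1 - √(lam i) * (√(lam i))⁻¹ : ℝ) : ℂ) := by
      simp only [D, Λ, diagonal_mul_diagonal, ← diagonal_one, diagonal_sub]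
      congr 1
      funext i
      push_cast
      rw [hsqrt]
    rw [hMM, ← map_one φ, ← map_sub, hdiag, Unitary.conjStarAlgAut_apply, star_eq_conjTranspose]
    refine (posSemidef_diagonal_iff.mpr fun i => ?_).mul_mul_conjTranspose_same _
    rw [Complex.zero_le_real, sub_nonneg]
    exact mul_inv_le_one
  · rw [mul_assoc, hspec, ← map_mul, Unitary.conjStarAlgAut_apply, trace_mul_cycle,
      Unitary.star_mul_self_of_mem U.2, one_mul, diagonal_mul_diagonal, trace_diagonal,
      traceNorm_eq_sum_sqrt_eigenvalues]
    push_cast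
    exact Finset.sum_congr rfl fun i _ => hsqrt i

theorem convexOn_traceNorm : ConvexOn ℝ Set.univ (traceNorm : Matrix n n ℂ → ℝ) := by
  refine ⟨convex_univ, fun X _ Y _ a b ha hb _ => ?_⟩
  obtain ⟨M, hM, hMtr⟩ := exists_trace_mul_eq_traceNorm (a • X + b • Y)
  calc traceNorm (a • X + b • Y) = (M * (a • X + b • Y)).trace.re := by rw [hMtr]; rfl
    _ = a * (M * X).trace.re + b * (M * Y).trace.re := by
        simp [mul_add, trace_add, trace_smul]
    _ ≤ a * traceNorm X + b * traceNorm Y := by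
        gcongr <;> exact re_trace_mul_le_traceNorm hM _

theorem convex_setOf_traceDist_le (ρ : Matrix n n ℂ) (ε : ℝ) :
    Convex ℝ {X : Matrix n n ℂ | traceDist X ρ ≤ ε} := by
  intro X hX Y hY a b ha hb hab
  have hsplit : a • X + b • Y - ρ = a • (X - ρ) + b • (Y - ρ) := by
    rw [smul_sub, smul_sub, sub_add_sub_comm, ← add_smul, hab, one_smul]
  simp only [Set.mem_ofPred_eq, traceDist, hsplit] at hX hY ⊢
  have := convexOn_traceNorm.2 (Set.mem_univ (X - ρ)) (Set.mem_univ (Y - ρ)) ha hb hab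
  rw [smul_eq_mul, smul_eq_mul] at this
  have hε : a * ε + b * ε = ε := by rw [← add_mul, hab, one_mul]
  linarith [mul_le_mul_of_nonneg_left hX ha, mul_le_mul_of_nonneg_left hY hb]

end TraceNorm

theorem AffineMap.apply_eq_of_mem_affineSpan {k V₁ P₁ V₂ P₂ : Type*} [Ring k]
    [AddCommGroup V₁] [Module k V₁] [AddTorsor V₁ P₁] [AddCommGroup V₂] [Module k V₂]
    [AddTorsor V₂ P₂] (f : P₁ →ᵃ[k] P₂) {s : Set P₁} {c : P₂} (hs : ∀ x ∈ s, f x = c)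
    {x : P₁} (hx : x ∈ affineSpan k s) : f x = c := by
  have hmap : f x ∈ affineSpan k (f '' s) :=
    AffineSubspace.map_span f s ▸ AffineSubspace.mem_map_of_mem f hx
  have himage : f '' s ⊆ {c} := Set.image_subset_iff.mpr hs
  exact (AffineSubspace.mem_affineSpan_singleton k V₂).mp (affineSpan_mono k himage hmap)

theorem stmt_0_general {d d' : ℕ} (ε : ℝ)
    (𝓟 𝓔 : Set (Matrix (Fin d) (Fin d) ℂ))
    (h𝓟 : ∀ ρ ∈ 𝓟, IsDensityMatrix ρ) (h𝓔 : ∀ τ ∈ 𝓔, IsDensityMatrix τ)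
    (hgeo : (convexHull ℝ 𝓟 ∩
      (affineSpan ℝ 𝓔 : Set (Matrix (Fin d) (Fin d) ℂ))).Nonempty)
    (ρ' τ' : Matrix (Fin d') (Fin d') ℂ) :
    (∃ L : Matrix (Fin d) (Fin d) ℂ →ₗ[ℂ] Matrix (Fin d') (Fin d') ℂ,
        (∀ ρ ∈ 𝓟, traceDist (L ρ) ρ' ≤ ε) ∧ (∀ τ ∈ 𝓔, L τ = τ')) ↔
      ε ≥ traceDist ρ' τ' := by
  constructor
  · rintro ⟨L, hL𝓟, hL𝓔⟩
    obtain ⟨σ, hσ𝓟, hσ𝓔⟩ := hgeo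
    have hLσ : L σ = τ' :=
      (L.restrictScalars ℝ).toAffineMap.apply_eq_of_mem_affineSpan hL𝓔 hσ𝓔
    have hball : convexHull ℝ 𝓟 ⊆ L ⁻¹' {X | traceDist X ρ' ≤ ε} :=
      convexHull_min hL𝓟 ((convex_setOf_traceDist_le ρ' ε).linear_preimage (L.restrictScalars ℝ))
    rw [ge_iff_le, traceDist_comm, ← hLσ]
    exact hball hσ𝓟
  · intro hdist
    refine ⟨(traceLinearMap (Fin d) ℂ ℂ).smulRight τ', fun ρ hρ => ?_, fun τ hτ => ?_⟩
    · simpa [(h𝓟 ρ hρ).2, traceDist_comm] using hdist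
    · simp [(h𝓔 τ hτ).2]

/-- No-go theorem for athermality "purification" under
Gibbs-preserving linear maps, for an uncertain athermal state `(𝓟, 𝓔)` with
`conv(𝓟) ∩ aff(𝓔) ≠ ∅`. -/
theorem stmt_0 {d d' : ℕ} (ε : ℝ) (hε : ε ∈ Set.Ico (0:ℝ) 1)
    (𝓟 𝓔 : Set (Matrix (Fin d) (Fin d) ℂ))
    (h𝓟 : ∀ ρ ∈ 𝓟, IsDensityMatrix ρ) (h𝓔 : ∀ τ ∈ 𝓔, IsDensityMatrix τ)
    (hgeo : (convexHull ℝ 𝓟 ∩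
      (affineSpan ℝ 𝓔 : Set (Matrix (Fin d) (Fin d) ℂ))).Nonempty)
    (ρ' τ' : Matrix (Fin d') (Fin d') ℂ)
    (hρ' : IsDensityMatrix ρ') (hτ' : IsDensityMatrix τ') :
    (∃ L : Matrix (Fin d) (Fin d) ℂ →ₗ[ℂ] Matrix (Fin d') (Fin d') ℂ,
        (∀ ρ ∈ 𝓟, traceDist (L ρ) ρ' ≤ ε) ∧ (∀ τ ∈ 𝓔, L τ = τ')) ↔
      ε ≥ traceDist ρ' τ' :=
  stmt_0_general ε 𝓟 𝓔 h𝓟 h𝓔 hgeo ρ' τ'
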